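/- Let S be a numerical semigroup with m(S) − ν(S) ≥ 2. Then ⌊w_{ν+1}/m⌋ ≥ ⌊w_1/m⌋ + ⌊w_2/m⌋, where m = m(S) and ν = ν(S). -/

import Mathlib

/-- A numerical semigroup: an additive submonoid of `ℕ` (containing `0`, closed under
addition) whose complement in `ℕ` is finite. -/
structure NumericalSemigroup where
  carrier : Set ℕ
  zero_mem : 0 ∈ carrier
  add_mem : ∀ ⦃a b : ℕ⦄, a ∈ carrier → b ∈ carrier → a + b ∈ carrier
  cofinite : (carrierᶜ : Set ℕ).Finite

namespace NumericalSemigroup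

/-- The multiplicity `m(S)`: the smallest positive element of `S`. -/
noncomputable def mult (S : NumericalSemigroup) : ℕ :=
  sInf {s : ℕ | s ∈ S.carrier ∧ 0 < s}

/-- The embedding dimension `ν(S)`: the cardinality of the (unique) minimal system of
generators of `S`, i.e. the least cardinality of a generating set. -/
noncomputable def embdim (S : NumericalSemigroup) : ℕ :=
  sInf {n : ℕ | ∃ G : Finset ℕ,
    S.carrier = (AddSubmonoid.closure (G : Set ℕ) : Set ℕ) ∧ G.card = n}

/-- The Frobenius number `f(S)`: the largest integer not belonging to `S`. -/
noncomputable def frob (S : NumericalSemigroup) : ℤ :=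
  sSup {x : ℤ | ∀ s ∈ S.carrier, (s : ℤ) ≠ x}

/-- `n(S)`: the number of elements of `S` smaller than the Frobenius number. -/
noncomputable def small (S : NumericalSemigroup) : ℕ :=
  {s : ℕ | s ∈ S.carrier ∧ (s : ℤ) < S.frob}.ncard

/-- The type `t(S)`: the number of pseudo-Frobenius numbers of `S`, i.e. integers
`x ∉ S` such that `x + s ∈ S` for every nonzero `s ∈ S`. -/
noncomputable def typ (S : NumericalSemigroup) : ℕ :=
  {x : ℤ | (∀ s ∈ S.carrier, (s : ℤ) ≠ x) ∧
    ∀ s ∈ S.carrier, 0 < s → ∃ u ∈ S.carrier, (u : ℤ) = x + s}.ncard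

/-- The `k`-th interval `I_k = [k·m, (k+1)·m - 1]` (for a given `m`). -/
def interval (m k : ℕ) : Set ℕ := Set.Ico (k * m) ((k + 1) * m)

/-- `n_k`: the number of elements of `S ∩ I_k` smaller than the Frobenius number. -/
noncomputable def nk (S : NumericalSemigroup) (k : ℕ) : ℕ :=
  {s : ℕ | s ∈ S.carrier ∩ interval S.mult k ∧ (s : ℤ) < S.frob}.ncard

/-- `L = ⌊f(S)/m(S)⌋`. -/
noncomputable def Lindex (S : NumericalSemigroup) : ℤ := S.frob / (S.mult : ℤ)

/-- `ρ = f(S) + 1 - L·m(S)`. -/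
noncomputable def rho (S : NumericalSemigroup) : ℤ :=
  S.frob + 1 - S.Lindex * (S.mult : ℤ)

/-- The Apéry set `Ap(S) = {w ∈ S : w - m(S) ∉ S}`. -/
def apery (S : NumericalSemigroup) : Set ℕ :=
  {w : ℕ | w ∈ S.carrier ∧ ∀ u ∈ S.carrier, u + S.mult ≠ w}

theorem apery_finite (S : NumericalSemigroup) : S.apery.Finite := by
  apply Set.Finite.subset ((Set.finite_Iio S.mult).union (S.cofinite.image (· + S.mult)))
  intro x hx
  by_cases h : x < S.mult
  · exact Or.inl h
  · refine Or.inr ⟨x - S.mult, fun hmem => hx.2 _ hmem (by omega), ?_⟩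
    show x - S.mult + S.mult = x
    omega

/-- `w j`: the `(j+1)`-st smallest element of the Apéry set, so that
`Ap(S) = {w 0 < w 1 < ... < w (m-1)}` with `w 0 = 0`. -/
noncomputable def w (S : NumericalSemigroup) (j : ℕ) : ℕ :=
  (S.apery_finite.toFinset.sort (· ≤ ·)).getD j 0

/-- `ε_j`: the number of `k ∈ {0, ..., L-1}` such that `|I_k ∩ S| = j`. -/
noncomputable def eps (S : NumericalSemigroup) (j : ℕ) : ℕ :=
  {k : ℕ | (k : ℤ) < S.Lindex ∧ (S.carrier ∩ interval S.mult k).ncard = j}.ncard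

/-- `η_j`: the number of `k ∈ ℕ` such that `|I_k ∩ S| = j`. -/
noncomputable def eta (S : NumericalSemigroup) (j : ℕ) : ℕ :=
  {k : ℕ | (S.carrier ∩ interval S.mult k).ncard = j}.ncard

/-! It suffices that `w₁ + w₂ ≤ w_{ν+1}`. Minimal generators lie in every generating set, so
at most `ν - 1` of them are among `w₁, …, w_{ν+1}`: a generating set of size `ν` also contains
`m ∉ Ap(S)`. Since `m - ν ≥ 2` these `w_i` exist, and two of them, `p < q`, are sums of two nonzero
Apéry elements, each at least `w₁`. Then `2 w₁ ≤ p < q`, so a summand of `q` exceeds `w₁`, hence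
is at least `w₂`, and `w₁ + w₂ ≤ q ≤ w_{ν+1}`. -/

open Finset

section

variable (S : NumericalSemigroup)

lemma exists_forall_ge_mem : ∃ N, ∀ n, N ≤ n → n ∈ S.carrier := by
  obtain ⟨N, hN⟩ := S.cofinite.bddAbove
  refine ⟨N + 1, fun n hn => ?_⟩
  by_contra hc
  exact absurd (hN hc) (by omega)

lemma mult_mem_and_pos : S.mult ∈ S.carrier ∧ 0 < S.mult := by
  obtain ⟨N, hN⟩ := S.exists_forall_ge_mem
  exact Nat.sInf_mem (s := {s | s ∈ S.carrier ∧ 0 < s}) ⟨N + 1, hN _ (by omega), by omega⟩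

lemma mult_mem : S.mult ∈ S.carrier := S.mult_mem_and_pos.1

lemma mult_pos : 0 < S.mult := S.mult_mem_and_pos.2

lemma mult_le {s : ℕ} (hs : s ∈ S.carrier) (hs0 : s ≠ 0) : S.mult ≤ s :=
  Nat.sInf_le ⟨hs, Nat.pos_of_ne_zero hs0⟩

lemma zero_mem_apery : 0 ∈ S.apery :=
  ⟨S.zero_mem, fun u _ hu => by have := S.mult_pos; omega⟩

lemma mult_not_mem_apery : S.mult ∉ S.apery :=
  fun h => h.2 0 S.zero_mem (zero_add _)

variable {S} in
lemma mem_apery_of_add_mem_apery {a b : ℕ} (ha : a ∈ S.carrier) (hb : b ∈ S.carrier)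
    (hab : a + b ∈ S.apery) : a ∈ S.apery :=
  ⟨ha, fun u hu hum => hab.2 (u + b) (S.add_mem hu hb) (by omega)⟩

/-- The least element of `S` in each residue class modulo `m` lies in the Apéry set. -/
lemma mult_le_card_apery : S.mult ≤ #S.apery_finite.toFinset := by
  obtain ⟨N, hN⟩ := S.exists_forall_ge_mem
  set m := S.mult
  have hne : ∀ r < m, {x | x ∈ S.carrier ∧ x % m = r}.Nonempty := fun r hr =>
    ⟨r + (N + 1) * m, hN _ (by nlinarith), by simp [Nat.mod_eq_of_lt hr]⟩
  set f : ℕ → ℕ := fun r => sInf {x | x ∈ S.carrier ∧ x % m = r}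
  have hf : ∀ r < m, f r ∈ S.carrier ∧ f r % m = r := fun r hr => Nat.sInf_mem (hne r hr)
  have hf_apery : ∀ r < m, f r ∈ S.apery := fun r hr =>
    ⟨(hf r hr).1, fun u hu hum => by
      have hur : u % m = r := by rw [← Nat.add_mod_right, hum, (hf r hr).2]
      have : f r ≤ u := Nat.sInf_le ⟨hu, hur⟩
      omega⟩
  simpa using card_le_card_of_injOn (s := range m) (t := S.apery_finite.toFinset) f
    (fun r hr => by simpa using hf_apery r (mem_range.mp hr))
    (fun r hr s hs hrs => by
      rw [← (hf r (mem_range.mp hr)).2, ← (hf s (mem_range.mp hs)).2, hrs])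

lemma carrier_eq_closure_insert_mult_apery :
    S.carrier = AddSubmonoid.closure (insert S.mult S.apery) := by
  apply Set.Subset.antisymm
  · intro s hs
    induction s using Nat.strong_induction_on with
    | _ s ih =>
      by_cases hap : s ∈ S.apery
      · exact AddSubmonoid.subset_closure (Set.mem_insert_of_mem _ hap)
      · obtain ⟨u, hu, rfl⟩ : ∃ u ∈ S.carrier, u + S.mult = s := by
          by_contra! hc
          exact hap ⟨hs, hc⟩
        exact AddSubmonoid.add_mem _ (ih u (by have := S.mult_pos; omega) hu)
          (AddSubmonoid.subset_closure (Set.mem_insert _ _))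
  · let M : AddSubmonoid ℕ := ⟨⟨S.carrier, fun ha hb => S.add_mem ha hb⟩, S.zero_mem⟩
    refine SetLike.coe_subset_coe.mpr (AddSubmonoid.closure_le (S := M).mpr ?_)
    rintro x (rfl | hx)
    exacts [S.mult_mem, hx.1]

lemma exists_closure_card_eq_embdim :
    ∃ G : Finset ℕ, S.carrier = AddSubmonoid.closure (G : Set ℕ) ∧ #G = S.embdim :=
  Nat.sInf_mem (s := {n | ∃ G : Finset ℕ,
      S.carrier = (AddSubmonoid.closure (G : Set ℕ) : Set ℕ) ∧ G.card = n})
    ⟨_, insert S.mult S.apery_finite.toFinset,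
      by simpa using S.carrier_eq_closure_insert_mult_apery, rfl⟩

def IsMinimalGenerator (g : ℕ) : Prop :=
  g ∈ S.carrier ∧ g ≠ 0 ∧ ∀ a ∈ S.carrier, ∀ b ∈ S.carrier, a + b = g → a = 0 ∨ b = 0

lemma isMinimalGenerator_mult : S.IsMinimalGenerator S.mult := by
  refine ⟨S.mult_mem, S.mult_pos.ne', fun a ha b hb hab => ?_⟩
  by_contra! h
  have := S.mult_le ha h.1
  have := S.mult_le hb h.2
  omega

variable {S} in
lemma IsMinimalGenerator.mem_of_carrier_eq_closure {G : Set ℕ} {g : ℕ}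
    (hg : S.IsMinimalGenerator g) (hG : S.carrier = AddSubmonoid.closure G) : g ∈ G := by
  have key : ∀ x (hx : x ∈ AddSubmonoid.closure G), x ∈ G ∨ x = 0 ∨
      ∃ a ∈ S.carrier, ∃ b ∈ S.carrier, a ≠ 0 ∧ b ≠ 0 ∧ a + b = x := by
    intro x hx
    induction hx using AddSubmonoid.closure_induction with
    | mem y hy => exact Or.inl hy
    | zero => exact Or.inr (Or.inl rfl)
    | add x y hx hy =>
      rw [← SetLike.mem_coe, ← hG] at hx hy
      rcases eq_or_ne x 0 with rfl | hx0
      · simpa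
      rcases eq_or_ne y 0 with rfl | hy0
      · simpa
      exact Or.inr (Or.inr ⟨x, hx, y, hy, hx0, hy0, rfl⟩)
  have hgG : g ∈ AddSubmonoid.closure G := by rw [← SetLike.mem_coe, ← hG]; exact hg.1
  obtain hgG | hg0 | ⟨a, ha, b, hb, ha0, hb0, hab⟩ := key g hgG
  · exact hgG
  · exact absurd hg0 hg.2.1
  · exact absurd (hg.2.2 a ha b hb hab) (not_or.mpr ⟨ha0, hb0⟩)

open Classical in
lemma card_filter_isMinimalGenerator_lt_embdim {T : Finset ℕ} (hT : ↑T ⊆ S.apery) :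
    #(T.filter S.IsMinimalGenerator) < S.embdim := by
  obtain ⟨G, hG, hGcard⟩ := S.exists_closure_card_eq_embdim
  have hmG : S.mult ∈ G := S.isMinimalGenerator_mult.mem_of_carrier_eq_closure hG
  have hsub : T.filter S.IsMinimalGenerator ⊆ G.erase S.mult := fun x hx => by
    rw [mem_filter] at hx
    refine mem_erase.mpr ⟨?_, hx.2.mem_of_carrier_eq_closure hG⟩
    rintro rfl
    exact S.mult_not_mem_apery (hT hx.1)
  have := card_le_card hsub
  rw [card_erase_of_mem hmG, hGcard] at this
  have := card_pos.mpr ⟨_, hmG⟩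
  omega

lemma exists_add_eq_of_not_isMinimalGenerator {x : ℕ} (hx : x ∈ S.apery) (hx0 : x ≠ 0)
    (hirr : ¬S.IsMinimalGenerator x) :
    ∃ a ∈ S.apery, ∃ b ∈ S.apery, a ≠ 0 ∧ b ≠ 0 ∧ a + b = x := by
  simp only [IsMinimalGenerator, not_and, not_forall, not_or] at hirr
  obtain ⟨a, ha, b, hb, hab, ha0, hb0⟩ := hirr hx.1 hx0
  subst hab
  exact ⟨a, mem_apery_of_add_mem_apery ha hb hx, b,
    mem_apery_of_add_mem_apery hb ha (add_comm a b ▸ hx), ha0, hb0, rfl⟩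

lemma w_eq_orderEmbOfFin (i : Fin #S.apery_finite.toFinset) :
    S.w i = S.apery_finite.toFinset.orderEmbOfFin rfl i := by
  rw [orderEmbOfFin_apply, w, List.getD_eq_getElem _ _ (by simp)]
  rfl

lemma w_mem_apery {i : ℕ} (hi : i < #S.apery_finite.toFinset) : S.w i ∈ S.apery := by
  simpa [← S.w_eq_orderEmbOfFin ⟨i, hi⟩] using
    orderEmbOfFin_mem S.apery_finite.toFinset rfl ⟨i, hi⟩

lemma w_lt_w {i j : ℕ} (hij : i < j) (hj : j < #S.apery_finite.toFinset) : S.w i < S.w j := by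
  rw [S.w_eq_orderEmbOfFin ⟨i, hij.trans hj⟩, S.w_eq_orderEmbOfFin ⟨j, hj⟩]
  exact (orderEmbOfFin _ rfl).strictMono hij

lemma w_injOn : Set.InjOn S.w (Set.Iio #S.apery_finite.toFinset) :=
  StrictMonoOn.injOn fun _ _ _ hj hij => S.w_lt_w hij hj

lemma w_le_w {i j : ℕ} (hij : i ≤ j) (hj : j < #S.apery_finite.toFinset) : S.w i ≤ S.w j := by
  rw [S.w_eq_orderEmbOfFin ⟨i, hij.trans_lt hj⟩, S.w_eq_orderEmbOfFin ⟨j, hj⟩]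
  exact (orderEmbOfFin _ rfl).monotone hij

lemma exists_w_eq {a : ℕ} (ha : a ∈ S.apery) :
    ∃ i < #S.apery_finite.toFinset, S.w i = a := by
  have : a ∈ Set.range (S.apery_finite.toFinset.orderEmbOfFin rfl) := by simpa using ha
  obtain ⟨i, rfl⟩ := this
  exact ⟨i, i.2, S.w_eq_orderEmbOfFin i⟩

lemma w_zero : S.w 0 = 0 := by
  obtain ⟨i, hi, hwi⟩ := S.exists_w_eq S.zero_mem_apery
  rcases Nat.eq_zero_or_pos i with rfl | hi0
  · exact hwi
  · have := S.w_lt_w hi0 hi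
    omega

/-- Past the end of the Apéry set `w` takes the junk value `0`, so no bound on `i` is needed. -/
lemma w_succ_le_of_w_lt {i a : ℕ} (ha : a ∈ S.apery) (hia : S.w i < a) : S.w (i + 1) ≤ a := by
  obtain ⟨k, hk, rfl⟩ := S.exists_w_eq ha
  by_cases hi : i + 1 < #S.apery_finite.toFinset
  · have hik : i < k := by
      by_contra! hki
      exact absurd (S.w_le_w hki (by omega)) (not_le.mpr hia)
    exact S.w_le_w hik hk
  · rw [w, List.getD_eq_default _ _ (by simpa using hi)]
    exact Nat.zero_le _

lemma w_one_le {a : ℕ} (ha : a ∈ S.apery) (ha0 : a ≠ 0) : S.w 1 ≤ a :=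
  S.w_succ_le_of_w_lt ha (by rw [w_zero]; omega)

lemma two_mul_w_one_le {x : ℕ} (hx : x ∈ S.apery) (hx0 : x ≠ 0)
    (hirr : ¬S.IsMinimalGenerator x) : 2 * S.w 1 ≤ x := by
  obtain ⟨a, ha, b, hb, ha0, hb0, rfl⟩ := S.exists_add_eq_of_not_isMinimalGenerator hx hx0 hirr
  have := S.w_one_le ha ha0
  have := S.w_one_le hb hb0
  omega

lemma w_one_add_w_two_le {x : ℕ} (hx : x ∈ S.apery) (hirr : ¬S.IsMinimalGenerator x)
    (hlt : 2 * S.w 1 < x) : S.w 1 + S.w 2 ≤ x := by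
  obtain ⟨a, ha, b, hb, ha0, hb0, rfl⟩ :=
    S.exists_add_eq_of_not_isMinimalGenerator hx (by omega) hirr
  have := S.w_one_le ha ha0
  have := S.w_one_le hb hb0
  rcases lt_or_ge (S.w 1) a with ha1 | ha1
  · have : S.w 2 ≤ a := S.w_succ_le_of_w_lt ha ha1
    omega
  · have : S.w 2 ≤ b := S.w_succ_le_of_w_lt hb (by omega)
    omega

lemma w_one_add_w_two_le_w_embdim_succ (hcard : S.embdim + 1 < #S.apery_finite.toFinset) :
    S.w 1 + S.w 2 ≤ S.w (S.embdim + 1) := by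
  classical
  set T := (Icc 1 (S.embdim + 1)).image S.w
  have hTcard : #T = S.embdim + 1 := by
    rw [card_image_of_injOn (S.w_injOn.mono fun i hi => by simp at hi ⊢; omega), Nat.card_Icc,
      Nat.add_sub_cancel]
  have hTapery : ↑T ⊆ S.apery := fun x hx => by
    obtain ⟨i, hi, rfl⟩ := mem_image.mp hx
    rw [mem_Icc] at hi
    exact S.w_mem_apery (by omega)
  have hTbounds : ∀ x ∈ T, x ≠ 0 ∧ x ≤ S.w (S.embdim + 1) := fun x hx => by
    obtain ⟨i, hi, rfl⟩ := mem_image.mp hx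
    rw [mem_Icc] at hi
    exact ⟨(S.w_zero ▸ S.w_lt_w hi.1 (by omega)).ne', S.w_le_w hi.2 hcard⟩
  have : 1 < #(T.filter fun x => ¬S.IsMinimalGenerator x) := by
    have := S.card_filter_isMinimalGenerator_lt_embdim hTapery
    have := card_filter_add_card_filter_not (s := T) S.IsMinimalGenerator
    omega
  obtain ⟨p, hp, q, hq, hpq⟩ := one_lt_card.mp this
  rw [mem_filter] at hp hq
  wlog hlt : p < q generalizing p q
  · exact this q hq p hp hpq.symm (by omega)
  have := S.two_mul_w_one_le (hTapery hp.1) (hTbounds p hp.1).1 hp.2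
  exact (S.w_one_add_w_two_le (hTapery hq.1) hq.2 (by omega)).trans (hTbounds q hq.1).2

end

/-- If `m(S) - ν(S) ≥ 2` then `⌊w_{ν+1}/m⌋ ≥ ⌊w_1/m⌋ + ⌊w_2/m⌋`. -/
theorem floor_w_succ_embdim (S : NumericalSemigroup)
    (h : 2 ≤ S.mult - S.embdim) :
    S.w (S.embdim + 1) / S.mult ≥ S.w 1 / S.mult + S.w 2 / S.mult := by
  have hcard : S.embdim + 1 < #S.apery_finite.toFinset := by
    have := S.mult_le_card_apery
    omega
  exact Nat.div_add_div_le_add_div.trans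
    (Nat.div_le_div_right (S.w_one_add_w_two_le_w_embdim_succ hcard))

end NumericalSemigroup
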